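/- arXiv:2410.05140 — 2 statements merged into one kernel-verified Lean document; each statement's English description precedes it below -/
import Mathlib

section
/- Let T be a positive integer and let a_1, a_2, …, a_T be nonnegative real numbers with a_1 ≥ 1. Then ∑_{l=1}^{T} a_l / (∑_{i=1}^{l} a_i) ≤ log(∑_{l=1}^{T} a_l) + 1, where log denotes the natural logarithm. -/
/-! The increment `a (n + 1) / S (n + 1)`, with `S n = ∑_{i ≤ n} a i`, is at most
`log S (n + 1) - log S n` by `1 - x⁻¹ ≤ log x`, so the sum telescopes to
`1 + log S T - log a 1`, and `log a 1 ≥ 0`. -/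

open Finset Real

theorem sub_div_le_log_sub_log {x y : ℝ} (hx : 0 < x) (hy : 0 < y) :
    (y - x) / y ≤ log y - log x := by
  have h := one_sub_inv_le_log_of_pos (div_pos hy hx)
  rwa [log_div hy.ne' hx.ne', inv_div, ← div_self hy.ne', ← sub_div] at h

section CumulativeSum

variable {T : ℕ} {a : ℕ → ℝ}

theorem le_sum_Icc_one (hT : 1 ≤ T) (ha : ∀ l, 1 ≤ l → l ≤ T → 0 ≤ a l) :
    a 1 ≤ ∑ i ∈ Icc 1 T, a i :=
  single_le_sum (fun i hi => ha i (mem_Icc.mp hi).1 (mem_Icc.mp hi).2) (mem_Icc.mpr ⟨le_rfl, hT⟩)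

theorem sum_div_cumsum_le_log_sub_log_add_one (hT : 1 ≤ T)
    (ha : ∀ l, 1 ≤ l → l ≤ T → 0 ≤ a l) (ha1 : 0 < a 1) :
    ∑ l ∈ Icc 1 T, a l / (∑ i ∈ Icc 1 l, a i)
      ≤ log (∑ l ∈ Icc 1 T, a l) - log (a 1) + 1 := by
  induction T, hT using Nat.le_induction with
  | base => simp [div_self ha1.ne']
  | succ n hn ih =>
    have ha_n : ∀ l, 1 ≤ l → l ≤ n → 0 ≤ a l := fun l h1 h2 => ha l h1 (h2.trans n.le_succ)
    have hS : 0 < ∑ i ∈ Icc 1 n, a i := ha1.trans_le (le_sum_Icc_one hn ha_n)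
    have hS' : 0 < ∑ i ∈ Icc 1 (n + 1), a i := ha1.trans_le (le_sum_Icc_one (by omega) ha)
    have step : a (n + 1) / ∑ i ∈ Icc 1 (n + 1), a i
        ≤ log (∑ i ∈ Icc 1 (n + 1), a i) - log (∑ i ∈ Icc 1 n, a i) := by
      convert sub_div_le_log_sub_log hS hS' using 2
      rw [sum_Icc_succ_top (by omega), add_sub_cancel_left]
    rw [sum_Icc_succ_top (by omega : 1 ≤ n + 1) fun l => a l / ∑ i ∈ Icc 1 l, a i]
    linarith [ih ha_n]

end CumulativeSum

/-- Lemma 3.2 of Ward et al., as used in the paper.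
For a positive integer `T` and nonnegative reals `a 1, …, a T` with `a 1 ≥ 1`,
`∑_{l=1}^{T} a l / (∑_{i=1}^{l} a i) ≤ log (∑_{l=1}^{T} a l) + 1`. -/
theorem sum_div_cumsum_le_log_add_one (T : ℕ) (hT : 1 ≤ T) (a : ℕ → ℝ)
    (ha : ∀ l, 1 ≤ l → l ≤ T → 0 ≤ a l) (ha1 : 1 ≤ a 1) :
    ∑ l ∈ Finset.Icc 1 T, a l / (∑ i ∈ Finset.Icc 1 l, a i)
      ≤ Real.log (∑ l ∈ Finset.Icc 1 T, a l) + 1 := by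
  have h := sum_div_cumsum_le_log_sub_log_add_one hT ha (one_pos.trans_le ha1)
  linarith [log_nonneg ha1]
end

section
/- For all x₁, x₂ ∈ ℝ^{d_x}, ‖y*(x₁) − y*(x₂)‖ ≤ (C_{g_{xy}}/μ)·‖x₁ − x₂‖; that is, the lower-level solution map y* is Lipschitz continuous with constant L_y := C_{g_{xy}}/μ. -/
/-! Strong convexity makes `y ↦ ∇_y g x y` strongly monotone with constant `μ`, and the bound on
the mixed derivative makes `x ↦ ∇_y g x y` `C_{g_{xy}}`-Lipschitz by the mean value inequality.
As `∇_y g x (y* x) = 0`, writing `yᵢ = y* xᵢ`,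
`μ ‖y₁ - y₂‖² ≤ ⟪∇_y g x₂ y₁ - ∇_y g x₂ y₂, y₁ - y₂⟫ = ⟪∇_y g x₂ y₁ - ∇_y g x₁ y₁, y₁ - y₂⟫`,
which is at most `C_{g_{xy}} ‖x₁ - x₂‖ ‖y₁ - y₂‖`. -/

noncomputable section

open scoped RealInnerProductSpace

variable {dx dy : ℕ}

/-- Partial gradient of a bivariate function with respect to its second argument. -/
def gY (f : EuclideanSpace ℝ (Fin dx) → EuclideanSpace ℝ (Fin dy) → ℝ)
    (x : EuclideanSpace ℝ (Fin dx)) (y : EuclideanSpace ℝ (Fin dy)) :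
    EuclideanSpace ℝ (Fin dy) :=
  gradient (fun y' => f x y') y

/-- Mixed second derivative `∇_x∇_y g (x,y)`, as a linear map `ℝ^{d_y} → ℝ^{d_x}`. -/
def gXY (g : EuclideanSpace ℝ (Fin dx) → EuclideanSpace ℝ (Fin dy) → ℝ)
    (x : EuclideanSpace ℝ (Fin dx)) (y : EuclideanSpace ℝ (Fin dy)) :
    EuclideanSpace ℝ (Fin dy) →L[ℝ] EuclideanSpace ℝ (Fin dx) :=
  ContinuousLinearMap.adjoint (fderiv ℝ (fun x' => gY g x' y) x)

open Set

section Convexity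

variable {E : Type*} [NormedAddCommGroup E]

theorem ConvexOn.le_sub_of_hasFDerivAt [NormedSpace ℝ E] {φ : E → ℝ} {φ' : E →L[ℝ] ℝ} {y : E}
    (hφ : ConvexOn ℝ univ φ) (hd : HasFDerivAt φ φ' y) (z : E) : φ' (z - y) ≤ φ z - φ y := by
  have hline : ConvexOn ℝ univ (φ ∘ (AffineMap.lineMap y z : ℝ →ᵃ[ℝ] E)) := by
    simpa using hφ.comp_affineMap (AffineMap.lineMap y z)
  have hderiv : HasDerivAt (φ ∘ (AffineMap.lineMap y z : ℝ →ᵃ[ℝ] E)) (φ' (z - y)) 0 := by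
    rw [← AffineMap.lineMap_apply_zero (k := ℝ) y z] at hd
    simpa using hd.comp_hasDerivAt (0 : ℝ) AffineMap.hasDerivAt_lineMap
  simpa [slope_def_field] using
    hline.le_slope_of_hasDerivAt (mem_univ 0) (mem_univ 1) one_pos hderiv

variable [InnerProductSpace ℝ E] [CompleteSpace E] {f : E → ℝ} {m : ℝ}

theorem StrongConvexOn.add_inner_gradient_add_le (hf : StrongConvexOn univ m f) {y : E}
    (hfy : DifferentiableAt ℝ f y) (z : E) :
    f y + ⟪gradient f y, z - y⟫ + m / 2 * ‖z - y‖ ^ 2 ≤ f z := by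
  have key := (strongConvexOn_iff_convex.mp hf).le_sub_of_hasFDerivAt
    (hfy.hasFDerivAt.sub ((hasStrictFDerivAt_norm_sq y).hasFDerivAt.const_mul (m / 2))) z
  simp only [sub_apply, smul_apply, innerSL_apply_apply, smul_eq_mul, nsmul_eq_mul,
    Nat.cast_ofNat] at key
  have hyz : ⟪y, z - y⟫ = ⟪z, y⟫ - ‖y‖ ^ 2 := by
    rw [inner_sub_right, real_inner_self_eq_norm_sq, real_inner_comm]
  rw [hyz] at key
  rw [inner_gradient_left, norm_sub_sq_real]
  linarith

theorem StrongConvexOn.mul_norm_sub_sq_le_inner_gradient_sub (hf : StrongConvexOn univ m f)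
    {a b : E} (ha : DifferentiableAt ℝ f a) (hb : DifferentiableAt ℝ f b) :
    m * ‖a - b‖ ^ 2 ≤ ⟪gradient f a - gradient f b, a - b⟫ := by
  have hab := hf.add_inner_gradient_add_le ha b
  have hba := hf.add_inner_gradient_add_le hb a
  rw [norm_sub_rev b a, ← neg_sub a b, inner_neg_right] at hab
  rw [inner_sub_left]
  linarith

end Convexity

section Root

variable {E F : Type*} [SeminormedAddCommGroup E] [NormedAddCommGroup F] [InnerProductSpace ℝ F]

theorem norm_root_sub_le_of_stronglyMonotone {G : E → F → F} {r : E → F} {μ C : ℝ}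
    (hμ : 0 < μ) (hroot : ∀ x, G x (r x) = 0)
    (hmono : ∀ x a b, μ * ‖a - b‖ ^ 2 ≤ ⟪G x a - G x b, a - b⟫)
    (hlip : ∀ x₁ x₂ a, ‖G x₁ a - G x₂ a‖ ≤ C * ‖x₁ - x₂‖) (x₁ x₂ : E) :
    ‖r x₁ - r x₂‖ ≤ C / μ * ‖x₁ - x₂‖ := by
  set d := r x₁ - r x₂
  have key : μ * ‖d‖ ^ 2 ≤ C * ‖x₁ - x₂‖ * ‖d‖ :=
    calc μ * ‖d‖ ^ 2 ≤ ⟪G x₂ (r x₁) - G x₂ (r x₂), d⟫ := hmono _ _ _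
      _ = ⟪G x₂ (r x₁) - G x₁ (r x₁), d⟫ := by rw [hroot, hroot]
      _ ≤ ‖G x₂ (r x₁) - G x₁ (r x₁)‖ * ‖d‖ := real_inner_le_norm _ _
      _ ≤ C * ‖x₁ - x₂‖ * ‖d‖ := by
        rw [norm_sub_rev x₁ x₂]; gcongr; exact hlip _ _ _
  have hd : μ * ‖d‖ ≤ C * ‖x₁ - x₂‖ := by
    rcases (norm_nonneg d).eq_or_lt with hd0 | hdpos
    · rw [← hd0, mul_zero]
      exact (norm_nonneg _).trans (hlip x₁ x₂ (r x₁))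
    · exact le_of_mul_le_mul_right (by linarith) hdpos
  rw [div_mul_eq_mul_div, le_div_iff₀ hμ]
  linarith

end Root

theorem norm_gY_sub_le {g : EuclideanSpace ℝ (Fin dx) → EuclideanSpace ℝ (Fin dy) → ℝ}
    {C : ℝ} (hg : ContDiff ℝ 2 (Function.uncurry g)) (hgxy : ∀ x y, ‖gXY g x y‖ ≤ C)
    (x₁ x₂ : EuclideanSpace ℝ (Fin dx)) (y : EuclideanSpace ℝ (Fin dy)) :
    ‖gY g x₁ y - gY g x₂ y‖ ≤ C * ‖x₁ - x₂‖ := by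
  have hdiff : Differentiable ℝ (fun x => gY g x y) :=
    ((InnerProductSpace.toDual ℝ _).symm.contDiff.comp
      (hg.fderiv contDiff_const (by norm_num) : ContDiff ℝ 1 _)).differentiable one_ne_zero
  refine convex_univ.norm_image_sub_le_of_norm_fderiv_le (fun x _ => hdiff x) (fun x _ => ?_)
    (mem_univ x₂) (mem_univ x₁)
  simpa only [gXY, LinearIsometryEquiv.norm_map] using hgxy x y

/-- the lower-level solution map `y*` is Lipschitz with constant
`L_y := C_{g_{xy}} / μ`. -/
theorem ystar_lipschitz
    (g : EuclideanSpace ℝ (Fin dx) → EuclideanSpace ℝ (Fin dy) → ℝ)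
    (hg : ContDiff ℝ 2 (Function.uncurry g))
    (μ Cgxy : ℝ) (hμ : 0 < μ)
    (hsc : ∀ x, StrongConvexOn Set.univ μ (fun y => g x y))
    (hgxy : ∀ x y, ‖gXY g x y‖ ≤ Cgxy)
    (ystar : EuclideanSpace ℝ (Fin dx) → EuclideanSpace ℝ (Fin dy))
    (hystar : ∀ x y, g x (ystar x) ≤ g x y) :
    ∀ x₁ x₂, ‖ystar x₁ - ystar x₂‖ ≤ (Cgxy / μ) * ‖x₁ - x₂‖ := by
  have hgx : ∀ x, Differentiable ℝ (g x) := fun x =>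
    (hg.differentiable two_ne_zero).comp ((differentiable_const x).prodMk differentiable_id)
  have hcrit : ∀ x, gY g x (ystar x) = 0 := fun x => by
    have hmin : IsLocalMin (g x) (ystar x) := Filter.Eventually.of_forall (hystar x)
    simp [gY, gradient, hmin.fderiv_eq_zero]
  exact norm_root_sub_le_of_stronglyMonotone hμ hcrit
    (fun x a b => (hsc x).mul_norm_sub_sq_le_inner_gradient_sub (hgx x a) (hgx x b))
    (norm_gY_sub_le hg hgxy)
end
end
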